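/- arXiv:1101.4512 — 2 statements merged into one kernel-verified Lean document; each statement's English description precedes it below -/
import Mathlib

section
/- Let b₁,…,b_m ∈ ℤⁿ and suppose 0 lies in the interior of the convex hull of {b₁,…,b_m} in ℝⁿ. Then there exist ε > 0 and a positive integer N such that for all t = (t₁,…,t_n) with every tᵢ > 0, Σ_{j=1}^m t^{b_j} ≥ ε · max_{1≤i≤n} max(t_i^{1/N}, t_i^{−1/N}), where t^{b} := ∏ᵢ tᵢ^{bᵢ}. -/
open Finset

private lemma sum_image_le' {α β : Type*} [DecidableEq β] (s : Finset α) (g : α → β)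
    (f : β → ℝ) (hf : ∀ y, 0 ≤ f y) :
    ∑ y ∈ s.image g, f y ≤ ∑ j ∈ s, f (g j) := by
  rw [Finset.sum_comp f g]
  refine Finset.sum_le_sum fun y hy => ?_
  have hcard : 1 ≤ (s.filter fun j => g j = y).card := by
    obtain ⟨j, hj, rfl⟩ := Finset.mem_image.mp hy
    exact Finset.card_pos.mpr ⟨j, Finset.mem_filter.mpr ⟨hj, rfl⟩⟩
  calc f y = 1 * f y := (one_mul _).symm
    _ ≤ (s.filter fun j => g j = y).card * f y := by
        exact mul_le_mul_of_nonneg_right (by exact_mod_cast hcard) (hf y)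
    _ = (s.filter fun j => g j = y).card • f y := (nsmul_eq_mul _ _).symm

private lemma key_amgm {n : ℕ} (t : Fin n → ℝ) (ht : ∀ k, 0 < t k)
    (s : Finset (Fin n → ℝ)) (w : (Fin n → ℝ) → ℝ)
    (hw0 : ∀ y ∈ s, 0 ≤ w y) (hw1 : ∑ y ∈ s, w y = 1) (v : Fin n → ℝ)
    (hv : ∑ y ∈ s, w y • y = v) :
    ∏ k, t k ^ v k ≤ ∑ y ∈ s, ∏ k, t k ^ y k := by
  have hz : ∀ y : Fin n → ℝ, 0 < ∏ k, t k ^ y k := fun y =>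
    Finset.prod_pos fun k _ => Real.rpow_pos_of_pos (ht k) _
  have h1 : ∏ k, t k ^ v k = ∏ y ∈ s, (∏ k, t k ^ y k) ^ w y := by
    have : ∀ y ∈ s, (∏ k, t k ^ y k) ^ w y = ∏ k, t k ^ (y k * w y) := by
      intro y _
      rw [← Real.finset_prod_rpow _ _ (fun k _ => (Real.rpow_pos_of_pos (ht k) _).le)]
      exact Finset.prod_congr rfl fun k _ => (Real.rpow_mul (ht k).le _ _).symm
    rw [Finset.prod_congr rfl this, Finset.prod_comm]
    refine Finset.prod_congr rfl fun k _ => ?_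
    rw [← Real.rpow_sum_of_pos (ht k)]
    congr 1
    have := congrFun hv k
    simp only [Finset.sum_apply, Pi.smul_apply, smul_eq_mul] at this
    rw [← this]
    exact Finset.sum_congr rfl fun y _ => mul_comm _ _
  rw [h1]
  calc ∏ y ∈ s, (∏ k, t k ^ y k) ^ w y
      ≤ ∑ y ∈ s, w y * ∏ k, t k ^ y k :=
        Real.geom_mean_le_arith_mean_weighted s w _ hw0 hw1 fun y _ => (hz y).le
    _ ≤ ∑ y ∈ s, ∏ k, t k ^ y k := by
        refine Finset.sum_le_sum fun y hy => ?_
        have hwle : w y ≤ 1 := hw1 ▸ Finset.single_le_sum hw0 hy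
        calc w y * ∏ k, t k ^ y k ≤ 1 * ∏ k, t k ^ y k :=
              mul_le_mul_of_nonneg_right hwle (hz y).le
          _ = ∏ k, t k ^ y k := one_mul _

theorem laurent_growth_estimate (m n : ℕ) (b : Fin m → Fin n → ℤ)
    (h0 : (0 : Fin n → ℝ) ∈
      interior (convexHull ℝ (Set.range fun i => fun j => (b i j : ℝ)))) :
    ∃ ε : ℝ, 0 < ε ∧ ∃ N : ℕ, 0 < N ∧
      ∀ t : Fin n → ℝ, (∀ i, 0 < t i) → ∀ i : Fin n,
        ε * max (t i ^ ((1 : ℝ) / N)) (t i ^ (-(1 : ℝ) / N)) ≤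
          ∑ j, ∏ k, t k ^ (b j k) := by
  set B : Fin m → Fin n → ℝ := fun i => fun j => (b i j : ℝ) with hB
  obtain ⟨δ, hδ, hball⟩ := Metric.mem_nhds_iff.mp (mem_interior_iff_mem_nhds.mp h0)
  set N : ℕ := ⌈1 / δ⌉₊ + 1 with hN
  have hNpos : 0 < N := Nat.succ_pos _
  have hNR : (0 : ℝ) < N := by exact_mod_cast hNpos
  have hNδ : (1 : ℝ) / N < δ := by
    rw [div_lt_iff₀ hNR]
    have h1 : 1 / δ < (N : ℝ) := by
      calc (1 : ℝ) / δ ≤ ⌈1 / δ⌉₊ := Nat.le_ceil _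
        _ < N := by exact_mod_cast Nat.lt_succ_self _
    calc (1 : ℝ) = δ * (1 / δ) := by field_simp
      _ < δ * N := by exact mul_lt_mul_of_pos_left h1 hδ
  refine ⟨1, one_pos, N, hNpos, fun t ht i => ?_⟩
  -- key: for any c with |c| = 1/N, t i ^ c ≤ sum
  have hrange : Set.range B = ↑(Finset.image B Finset.univ) := by
    rw [Finset.coe_image, Finset.coe_univ, Set.image_univ]
  have main : ∀ c : ℝ, |c| = 1 / N → t i ^ c ≤ ∑ j, ∏ k, t k ^ (b j k) := by
    intro c hc
    have hmem : Pi.single i c ∈ convexHull ℝ (Set.range B) := by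
      apply hball
      rw [Metric.mem_ball, dist_zero_right, Pi.norm_single, Real.norm_eq_abs, hc]
      exact hNδ
    rw [hrange, Finset.mem_convexHull'] at hmem
    obtain ⟨w, hw0, hw1, hwv⟩ := hmem
    have hkey := key_amgm t ht _ w hw0 hw1 _ hwv
    have hL : ∏ k, t k ^ (Pi.single i c : Fin n → ℝ) k = t i ^ c := by
      rw [Finset.prod_eq_single i (fun k _ hk => by
          rw [Pi.single_eq_of_ne hk, Real.rpow_zero]) (fun h => absurd (Finset.mem_univ i) h)]
      rw [Pi.single_eq_same]
    rw [hL] at hkey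
    refine hkey.trans ?_
    have := sum_image_le' Finset.univ B (fun y => ∏ k, t k ^ y k)
      (fun y => (Finset.prod_pos fun k _ => Real.rpow_pos_of_pos (ht k) _).le)
    refine this.trans (le_of_eq ?_)
    refine Finset.sum_congr rfl fun j _ => Finset.prod_congr rfl fun k _ => ?_
    rw [hB]
    exact Real.rpow_intCast (t k) (b j k)
  rw [one_mul]
  refine max_le ?_ ?_
  · exact main (1 / N) (abs_of_pos (by positivity))
  · refine main (-(1 : ℝ) / N) ?_
    rw [neg_div, abs_neg, abs_of_pos (by positivity)]
end

section
/- Let W_q = x₁ + x₂ + x₃ + x₄ + x₅ + q·(x₁x₂x₃x₄x₅)^{−1} in the Laurent polynomial ring ℚ[q][x₁^{±1},…,x₅^{±1}]. For M ∈ ℕ, the constant term (coefficient of x₁⁰⋯x₅⁰) of W_q^M equals (6d)!/(d!)⁶ · q^d if M = 6d for some d ∈ ℕ, and equals 0 if 6 does not divide M. -/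
open Finset Polynomial

/-!
By the multinomial theorem, `W_q ^ M` is a sum over `k : Fin 6 → ℕ` with `∑ k = M` of
`multinomial k · q ^ k₆ · x ^ (k₁, …, k₅) · (x₁⋯x₅) ^ (-k₆)`. The monomial is constant exactly
when `k₁ = ⋯ = k₅ = k₆ = d`, which forces `M = 6 d` and leaves the single term
`(6d)! / (d!)⁶ · q ^ d`.
-/

noncomputable def mirrorQuinticW : AddMonoidAlgebra (Polynomial ℚ) (Fin 5 → ℤ) :=
  (∑ i : Fin 5, AddMonoidAlgebra.single (Pi.single i 1) (1 : Polynomial ℚ)) +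
    AddMonoidAlgebra.single (fun _ => (-1 : ℤ)) (Polynomial.X : Polynomial ℚ)

namespace AddMonoidAlgebra

theorem coeff_sum_single_pow {ι R G : Type*} [DecidableEq ι] [CommSemiring R] [AddCommMonoid G]
    [DecidableEq G] (s : Finset ι) (v : ι → G) (c : ι → R) (M : ℕ) (x : G) :
    ((∑ i ∈ s, single (v i) (c i)) ^ M).coeff x =
      ∑ k ∈ s.piAntidiag M with ∑ i ∈ s, k i • v i = x,
        (Nat.multinomial s k : R) * ∏ i ∈ s, c i ^ k i := by
  simp only [Finset.sum_pow_eq_sum_piAntidiag, single_pow, prod_single, natCast_def,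
    single_mul_single, zero_add, coeff_sum, Finsupp.finsetSum_apply, coeff_single,
    Finsupp.single_apply, Finset.sum_filter]

end AddMonoidAlgebra

theorem Finset.const_mem_piAntidiag_univ_iff {ι : Type*} [Fintype ι] [DecidableEq ι] (M d : ℕ) :
    (fun _ => d) ∈ (univ : Finset ι).piAntidiag M ↔ M = Fintype.card ι * d := by
  simp [mem_piAntidiag, eq_comm]

theorem Nat.multinomial_univ_const {ι : Type*} [Fintype ι] (d : ℕ) :
    Nat.multinomial (univ : Finset ι) (fun _ => d) =
      Nat.factorial (Fintype.card ι * d) / Nat.factorial d ^ Fintype.card ι := by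
  simp [Nat.multinomial]

namespace MirrorQuintic

open AddMonoidAlgebra

/-- `W_q = ∑ i : Fin 6, coefficient i • x ^ exponent i`: the five variables, then `q (x₁⋯x₅)⁻¹`
as the last term. -/
def exponent : Fin 6 → Fin 5 → ℤ :=
  Fin.lastCases (fun _ => -1) (fun i => Pi.single i 1)

noncomputable def coefficient : Fin 6 → ℚ[X] :=
  Fin.lastCases X (fun _ => 1)

theorem mirrorQuinticW_eq_sum : mirrorQuinticW = ∑ i, single (exponent i) (coefficient i) := by
  rw [Fin.sum_univ_castSucc]
  simp [mirrorQuinticW, exponent, coefficient, -Fin.reduceLast]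

theorem sum_smul_exponent_apply (k : Fin 6 → ℕ) (j : Fin 5) :
    (∑ i, k i • exponent i) j = k j.castSucc - k (Fin.last 5) := by
  simp [Fin.sum_univ_castSucc, exponent, Pi.single_apply, sub_eq_add_neg, -Fin.reduceLast]

theorem sum_smul_exponent_eq_zero_iff (k : Fin 6 → ℕ) :
    ∑ i, k i • exponent i = 0 ↔ ∃ d, k = fun _ => d := by
  simp only [funext_iff, sum_smul_exponent_apply, Pi.zero_apply, sub_eq_zero, Nat.cast_inj]
  constructor
  · intro h
    exact ⟨k (Fin.last 5), Fin.lastCases rfl h⟩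
  · rintro ⟨d, hd⟩ j
    rw [hd, hd]

theorem prod_coefficient_pow (d : ℕ) : ∏ i, coefficient i ^ d = X ^ d := by
  simp [Fin.prod_univ_castSucc, coefficient, -Fin.reduceLast]

def balancedExponents (M : ℕ) : Finset (Fin 6 → ℕ) :=
  {k ∈ univ.piAntidiag M | ∑ i, k i • exponent i = 0}

theorem mem_balancedExponents {M : ℕ} {k : Fin 6 → ℕ} :
    k ∈ balancedExponents M ↔ ∃ d, k = (fun _ => d) ∧ M = 6 * d := by
  rw [balancedExponents, mem_filter, sum_smul_exponent_eq_zero_iff]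
  constructor
  · rintro ⟨hk, d, rfl⟩
    exact ⟨d, rfl, by simpa using (const_mem_piAntidiag_univ_iff M d).1 hk⟩
  · rintro ⟨d, rfl, hM⟩
    exact ⟨(const_mem_piAntidiag_univ_iff M d).2 (by simpa using hM), d, rfl⟩

theorem balancedExponents_six_mul (d : ℕ) : balancedExponents (6 * d) = {fun _ => d} := by
  ext k
  rw [mem_balancedExponents, mem_singleton]
  constructor
  · rintro ⟨e, rfl, he⟩
    obtain rfl : e = d := by omega
    rfl
  · rintro rfl
    exact ⟨d, rfl, rfl⟩

theorem balancedExponents_eq_empty {M : ℕ} (hM : ¬ 6 ∣ M) : balancedExponents M = ∅ := by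
  refine eq_empty_of_forall_notMem fun k hk => ?_
  obtain ⟨d, -, rfl⟩ := mem_balancedExponents.1 hk
  exact hM (dvd_mul_right 6 d)

theorem coeff_zero_mirrorQuinticW_pow (M : ℕ) :
    (mirrorQuinticW ^ M).coeff 0 =
      ∑ k ∈ balancedExponents M, (Nat.multinomial univ k : ℚ[X]) * ∏ i, coefficient i ^ k i := by
  rw [mirrorQuinticW_eq_sum, coeff_sum_single_pow, balancedExponents]

end MirrorQuintic

theorem mirror_quintic_constant_term :
    (∀ d M : ℕ, M = 6 * d →
      (mirrorQuinticW ^ M).coeff 0 =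
        ((Nat.factorial (6 * d) / (Nat.factorial d) ^ 6 : ℕ) : Polynomial ℚ) *
          Polynomial.X ^ d) ∧
    (∀ M : ℕ, ¬ (6 ∣ M) → (mirrorQuinticW ^ M).coeff 0 = 0) := by
  constructor
  · rintro d M rfl
    rw [MirrorQuintic.coeff_zero_mirrorQuinticW_pow, MirrorQuintic.balancedExponents_six_mul,
      sum_singleton, Nat.multinomial_univ_const, Fintype.card_fin,
      MirrorQuintic.prod_coefficient_pow]
  · intro M hM
    rw [MirrorQuintic.coeff_zero_mirrorQuinticW_pow, MirrorQuintic.balancedExponents_eq_empty hM,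
      sum_empty]
end
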